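/- Let p ≥ 1, ν > 0, let Θ₀ be a positive definite p×p matrix, and let X = Θ₀^{−1/2} u R, where u is uniformly distributed on the unit sphere S^{p−1} ⊂ ℝ^p and R ≥ 0 is independent of u. Then E[ XXᵀ/(ν + XᵀΘ₀X) ] = (1/p)·E[R²/(ν+R²)]·Θ₀^{−1}, and consequently the expected t-loss score vanishes at Θ₀, i.e., E[ −(1/2)Θ₀^{−1} + ((ν+p)/2)·XXᵀ/(ν + XᵀΘ₀X) ] = 0, if and only if E[R²/(ν+R²)] = p/(ν+p). -/

import Mathlib

/-
With `S = Θ₀^{-1/2}` symmetric and `Sᵀ Θ₀ S = 1`, the quadratic form is `XᵀΘ₀X = R² |u|² = R²`,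
so `X Xᵀ/(ν + XᵀΘ₀X) = R²/(ν + R²) · (Su)(Su)ᵀ` and, by independence, the expectation
factors. Invariance of the law of `u` under coordinate sign flips and transpositions forces
`E[u uᵀ] = I/p`, hence `E[(Su)(Su)ᵀ] = S Sᵀ/p = Θ₀⁻¹/p`. The expected score is then
`(-(1/2) + (ν+p)/(2p) E[R²/(ν+R²)]) Θ₀⁻¹`, which vanishes iff the scalar factor does,
as `Θ₀⁻¹ ≠ 0`.
-/

open MeasureTheory ProbabilityTheory Matrix

/-- The square root of a positive semidefinite matrix, as defined in the older Mathlib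
(removed since in favour of `CFC.sqrt`). -/
noncomputable def Matrix.PosSemidef.sqrt {n 𝕜 : Type*} [Fintype n] [DecidableEq n] [RCLike 𝕜]
    [PartialOrder 𝕜] {A : Matrix n n 𝕜} (hA : A.PosSemidef) : Matrix n n 𝕜 :=
  hA.1.eigenvectorUnitary.1 * diagonal ((↑) ∘ Real.sqrt ∘ hA.1.eigenvalues) *
    (star hA.1.eigenvectorUnitary : Matrix n n 𝕜)

namespace Matrix

variable {n : Type*} [Fintype n] [DecidableEq n]

lemma PosSemidef.sqrt_mul_self {A : Matrix n n ℝ} (hA : A.PosSemidef) :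
    hA.sqrt * hA.sqrt = A := by
  set U : Matrix n n ℝ := (hA.1.eigenvectorUnitary : Matrix n n ℝ)
  have hU : star U * U = 1 := Unitary.star_mul_self_of_mem hA.1.eigenvectorUnitary.2
  have hspec := hA.1.spectral_theorem
  rw [Unitary.conjStarAlgAut_apply] at hspec
  conv_rhs => rw [hspec]
  calc hA.sqrt * hA.sqrt
      = U * (diagonal (Real.sqrt ∘ hA.1.eigenvalues) * (star U * U) *
          diagonal (Real.sqrt ∘ hA.1.eigenvalues)) * star U := by
        simp only [PosSemidef.sqrt, Matrix.mul_assoc]; rfl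
    _ = _ := by
      rw [hU, Matrix.mul_one, diagonal_mul_diagonal]
      congr 3
      funext k
      simp [Real.mul_self_sqrt (hA.eigenvalues_nonneg k)]

lemma PosSemidef.transpose_sqrt {A : Matrix n n ℝ} (hA : A.PosSemidef) :
    hA.sqrtᵀ = hA.sqrt := by
  simp [PosSemidef.sqrt, transpose_mul, star_eq_conjTranspose, Matrix.mul_assoc,
    conjTranspose_eq_transpose_of_trivial]

variable {R : Type*} [CommRing R]

lemma mul_mul_self_eq_one_of_mul_self_eq_inv {A S : Matrix n n R} (hA : IsUnit A.det)
    (hS : S * S = A⁻¹) : S * A * S = 1 := by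
  have hSdet : IsUnit S.det :=
    isUnit_of_mul_isUnit_left (by rw [← det_mul, hS]; exact isUnit_nonsing_inv_det A hA)
  calc S * A * S = S⁻¹ * (S * S * A * S) := by
        simp only [Matrix.mul_assoc, nonsing_inv_mul_cancel_left _ _ hSdet]
    _ = 1 := by rw [hS, nonsing_inv_mul _ hA, Matrix.one_mul, nonsing_inv_mul _ hSdet]

lemma mulVec_dotProduct_mulVec_mulVec {A S : Matrix n n R} (h : Sᵀ * A * S = 1) (v : n → R) :
    (S *ᵥ v) ⬝ᵥ A *ᵥ (S *ᵥ v) = v ⬝ᵥ v := by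
  calc (S *ᵥ v) ⬝ᵥ A *ᵥ (S *ᵥ v) = v ⬝ᵥ (Sᵀ * A * S) *ᵥ v := by
        rw [Matrix.mul_assoc, ← mulVec_mulVec, ← mulVec_mulVec, dotProduct_mulVec v Sᵀ,
          vecMul_transpose]
    _ = v ⬝ᵥ v := by rw [h, one_mulVec]

omit [DecidableEq n] in
lemma mulVec_mul_mulVec_apply (M : Matrix n n R) (v : n → R) (i j : n) :
    (M *ᵥ v) i * (M *ᵥ v) j = ∑ k, ∑ l, M i k * M j l * (v k * v l) := by
  simp only [mulVec, dotProduct, Finset.sum_mul_sum]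
  exact Finset.sum_congr rfl fun k _ => Finset.sum_congr rfl fun l _ => by ring

lemma diagonal_mem_orthogonalGroup {d : n → R} (hd : ∀ i, d i * d i = 1) :
    diagonal d ∈ orthogonalGroup n R := by
  rw [mem_orthogonalGroup_iff', diagonal_transpose, diagonal_mul_diagonal, ← diagonal_one]
  exact congrArg diagonal (funext hd)

lemma permMatrix_mem_orthogonalGroup (σ : Equiv.Perm n) :
    σ.permMatrix R ∈ orthogonalGroup n R := by
  rw [mem_orthogonalGroup_iff', transpose_permMatrix, ← permMatrix_mul, mul_inv_cancel,
    permMatrix_one]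

end Matrix

lemma abs_le_one_of_sum_sq_eq_one {n : Type*} [Fintype n] {v : n → ℝ} (hv : ∑ i, v i ^ 2 = 1)
    (k : n) : |v k| ≤ 1 :=
  (sq_le_one_iff_abs_le_one _).1 <| hv ▸ Finset.single_le_sum (fun l _ => sq_nonneg (v l))
    (Finset.mem_univ k)

section Sphere

variable {Ω : Type*} [MeasurableSpace Ω] {μ : Measure Ω} {n : Type*} [Fintype n]
  {u : Ω → n → ℝ}

lemma integrable_coord_mul_coord [IsFiniteMeasure μ] (hu : Measurable u)
    (hsphere : ∀ᵐ ω ∂μ, ∑ i, u ω i ^ 2 = 1) (k l : n) :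
    Integrable (fun ω => u ω k * u ω l) μ := by
  refine Integrable.of_bound (by fun_prop) 1 ?_
  filter_upwards [hsphere] with ω hω
  rw [Real.norm_eq_abs, abs_mul]
  exact mul_le_one₀ (abs_le_one_of_sum_sq_eq_one hω k) (abs_nonneg _)
    (abs_le_one_of_sum_sq_eq_one hω l)

variable [DecidableEq n]

lemma integral_comp_mulVec_of_map_eq (hu : Measurable u)
    (hrot : ∀ O : orthogonalGroup n ℝ,
      μ.map (fun ω => (O : Matrix n n ℝ) *ᵥ u ω) = μ.map u)
    {O : Matrix n n ℝ} (hO : O ∈ orthogonalGroup n ℝ) {F : (n → ℝ) → ℝ} (hF : Measurable F) :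
    ∫ ω, F (O *ᵥ u ω) ∂μ = ∫ ω, F (u ω) ∂μ := by
  have hOu : Measurable fun ω => O *ᵥ u ω := by fun_prop
  rw [← integral_map hOu.aemeasurable hF.aestronglyMeasurable, hrot ⟨O, hO⟩,
    integral_map hu.aemeasurable hF.aestronglyMeasurable]

lemma integral_coord_mul_coord_of_ne (hu : Measurable u)
    (hrot : ∀ O : orthogonalGroup n ℝ,
      μ.map (fun ω => (O : Matrix n n ℝ) *ᵥ u ω) = μ.map u)
    {k l : n} (hkl : k ≠ l) : ∫ ω, u ω k * u ω l ∂μ = 0 := by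
  set d : n → ℝ := fun m => if m = l then -1 else 1
  have hd : ∀ m, d m * d m = 1 := fun m => by by_cases hm : m = l <;> simp [d, hm]
  have hflip := integral_comp_mulVec_of_map_eq hu hrot (diagonal_mem_orthogonalGroup hd)
    (F := fun v => v k * v l) (by fun_prop)
  simp only [mulVec_diagonal, d, if_neg hkl, if_true, one_mul, neg_one_mul, mul_neg,
    integral_neg] at hflip
  linarith

lemma integral_coord_sq_eq (hu : Measurable u)
    (hrot : ∀ O : orthogonalGroup n ℝ,
      μ.map (fun ω => (O : Matrix n n ℝ) *ᵥ u ω) = μ.map u) (k l : n) :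
    ∫ ω, u ω k ^ 2 ∂μ = ∫ ω, u ω l ^ 2 ∂μ := by
  have hswap := integral_comp_mulVec_of_map_eq hu hrot
    (permMatrix_mem_orthogonalGroup (Equiv.swap k l)) (F := fun v => v k ^ 2) (by fun_prop)
  simpa [permMatrix_mulVec] using hswap.symm

lemma integral_coord_mul_coord [IsProbabilityMeasure μ] (hu : Measurable u)
    (hsphere : ∀ᵐ ω ∂μ, ∑ i, u ω i ^ 2 = 1)
    (hrot : ∀ O : orthogonalGroup n ℝ,
      μ.map (fun ω => (O : Matrix n n ℝ) *ᵥ u ω) = μ.map u) (k l : n) :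
    ∫ ω, u ω k * u ω l ∂μ = (Fintype.card n : ℝ)⁻¹ * (1 : Matrix n n ℝ) k l := by
  rcases eq_or_ne k l with rfl | hkl
  · have hsum : ∑ i, ∫ ω, u ω i ^ 2 ∂μ = 1 := by
      rw [← integral_finsetSum _ fun i _ => by
        simpa only [sq] using integrable_coord_mul_coord hu hsphere i i]
      simp [integral_congr_ae hsphere]
    simp_rw [integral_coord_sq_eq hu hrot _ k, Finset.sum_const, Finset.card_univ,
      nsmul_eq_mul] at hsum
    have : (Fintype.card n : ℝ) ≠ 0 := by have := Fintype.card_pos_iff.2 ⟨k⟩; positivity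
    simp_rw [one_apply_eq, mul_one, ← sq]
    field_simp
    linarith
  · rw [one_apply_ne hkl, mul_zero, integral_coord_mul_coord_of_ne hu hrot hkl]

end Sphere

section Elliptical

variable {Ω : Type*} [MeasurableSpace Ω] {μ : Measure Ω} [IsProbabilityMeasure μ]
  {n : Type*} [Fintype n] [DecidableEq n] {u : Ω → n → ℝ}

omit [DecidableEq n] in
lemma integrable_mulVec_mul_mulVec (hu : Measurable u)
    (hsphere : ∀ᵐ ω ∂μ, ∑ i, u ω i ^ 2 = 1) (M : Matrix n n ℝ) (i j : n) :
    Integrable (fun ω => (M *ᵥ u ω) i * (M *ᵥ u ω) j) μ := by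
  simp_rw [mulVec_mul_mulVec_apply]
  exact integrable_finsetSum _ fun k _ => integrable_finsetSum _ fun l _ =>
    (integrable_coord_mul_coord hu hsphere k l).const_mul _

lemma integral_mulVec_mul_mulVec (hu : Measurable u)
    (hsphere : ∀ᵐ ω ∂μ, ∑ i, u ω i ^ 2 = 1)
    (hrot : ∀ O : orthogonalGroup n ℝ,
      μ.map (fun ω => (O : Matrix n n ℝ) *ᵥ u ω) = μ.map u) (M : Matrix n n ℝ) (i j : n) :
    ∫ ω, (M *ᵥ u ω) i * (M *ᵥ u ω) j ∂μ = (Fintype.card n : ℝ)⁻¹ * (M * Mᵀ) i j := by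
  have hint := integrable_coord_mul_coord hu hsphere (μ := μ)
  simp_rw [mulVec_mul_mulVec_apply]
  rw [integral_finsetSum _ fun k _ => integrable_finsetSum _ fun l _ => (hint k l).const_mul _]
  simp_rw [integral_finsetSum _ fun l _ => (hint _ l).const_mul _, integral_const_mul,
    integral_coord_mul_coord hu hsphere hrot, mul_apply, transpose_apply, Finset.mul_sum]
  simp [one_apply, mul_comm]

lemma coord_mul_div_add_dotProduct_smul_mulVec {ν : ℝ} {Θ S : Matrix n n ℝ}
    (hS : Sᵀ * Θ * S = 1) {v : n → ℝ} (hv : ∑ i, v i ^ 2 = 1) (r : ℝ) (i j : n) :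
    (r • (S *ᵥ v)) i * (r • (S *ᵥ v)) j / (ν + (r • (S *ᵥ v)) ⬝ᵥ Θ *ᵥ (r • (S *ᵥ v)))
      = r ^ 2 / (ν + r ^ 2) * ((S *ᵥ v) i * (S *ᵥ v) j) := by
  have hvv : v ⬝ᵥ v = 1 := by simpa [dotProduct, sq] using hv
  rw [mulVec_smul, smul_dotProduct, dotProduct_smul, mulVec_dotProduct_mulVec_mulVec hS, hvv]
  simp only [Pi.smul_apply, smul_eq_mul]
  ring

lemma integrable_and_integral_ratio_of_elliptical {ν : ℝ} (hν : 0 < ν) (hu : Measurable u)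
    (hsphere : ∀ᵐ ω ∂μ, ∑ i, u ω i ^ 2 = 1)
    (hrot : ∀ O : orthogonalGroup n ℝ,
      μ.map (fun ω => (O : Matrix n n ℝ) *ᵥ u ω) = μ.map u)
    {R : Ω → ℝ} (hR : Measurable R) (hindep : IndepFun u R μ)
    {Θ S : Matrix n n ℝ} (hS : Sᵀ * Θ * S = 1)
    {X : Ω → n → ℝ} (hX : ∀ ω, X ω = R ω • (S *ᵥ u ω)) (i j : n) :
    Integrable (fun ω => X ω i * X ω j / (ν + X ω ⬝ᵥ Θ *ᵥ X ω)) μ ∧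
      ∫ ω, X ω i * X ω j / (ν + X ω ⬝ᵥ Θ *ᵥ X ω) ∂μ
        = (Fintype.card n : ℝ)⁻¹ * (∫ ω, R ω ^ 2 / (ν + R ω ^ 2) ∂μ) * (S * Sᵀ) i j := by
  have hae : (fun ω => X ω i * X ω j / (ν + X ω ⬝ᵥ Θ *ᵥ X ω))
      =ᵐ[μ] fun ω => R ω ^ 2 / (ν + R ω ^ 2) * ((S *ᵥ u ω) i * (S *ᵥ u ω) j) := by
    filter_upwards [hsphere] with ω hω
    rw [hX]
    exact coord_mul_div_add_dotProduct_smul_mulVec hS hω _ i j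
  have hbound : ∀ r : ℝ, ‖r ^ 2 / (ν + r ^ 2)‖ ≤ 1 := fun r => by
    rw [Real.norm_of_nonneg (by positivity), div_le_one (by positivity)]
    linarith
  have hf : Measurable fun r : ℝ => r ^ 2 / (ν + r ^ 2) := by fun_prop
  have hg : Measurable fun v : n → ℝ => (S *ᵥ v) i * (S *ᵥ v) j := by fun_prop
  refine ⟨?_, ?_⟩
  · exact ((integrable_mulVec_mul_mulVec hu hsphere S i j).bdd_mul
      (hf.comp hR).aestronglyMeasurable (ae_of_all _ fun ω => hbound (R ω))).congr hae.symm
  · rw [integral_congr_ae hae, hindep.symm.integral_fun_comp_mul_comp hR.aemeasurable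
      hu.aemeasurable hf.aestronglyMeasurable hg.aestronglyMeasurable,
      integral_mulVec_mul_mulVec hu hsphere hrot]
    ring

end Elliptical

lemma forall_neg_half_mul_add_mul_eq_zero_iff {n : Type*} {A : Matrix n n ℝ} (hA : A ≠ 0)
    (c : ℝ) : (∀ i j, -(1 / 2 : ℝ) * A i j + c * A i j = 0) ↔ c = 1 / 2 := by
  refine ⟨fun h => ?_, fun hc i j => by rw [hc]; ring⟩
  obtain ⟨i, j, hij⟩ : ∃ i j, A i j ≠ 0 := by
    by_contra! h0
    exact hA (Matrix.ext h0)
  have : (c - 1 / 2) * A i j = 0 := by linarith [h i j]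
  linarith [(mul_eq_zero.1 this).resolve_right hij]

theorem stmt13_general
    {Ω : Type*} [MeasurableSpace Ω] (μ : Measure Ω) [IsProbabilityMeasure μ]
    {p : ℕ} (hp : 1 ≤ p) (ν : ℝ) (hν : 0 < ν)
    (Θ₀ : Matrix (Fin p) (Fin p) ℝ) (hΘ₀ : Θ₀.PosDef)
    (u : Ω → Fin p → ℝ) (hu : Measurable u)
    (husphere : ∀ᵐ ω ∂μ, ∑ i, (u ω i) ^ 2 = 1)
    (hurot : ∀ O : Matrix.orthogonalGroup (Fin p) ℝ,
      Measure.map (fun ω => (O : Matrix (Fin p) (Fin p) ℝ) *ᵥ u ω) μ = Measure.map u μ)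
    (R : Ω → ℝ) (hR : Measurable R)
    (hindep : IndepFun u R μ)
    (X : Ω → Fin p → ℝ)
    (hXdef : ∀ ω, X ω = R ω • (hΘ₀.inv.posSemidef.sqrt *ᵥ u ω)) :
    (∀ i j, ∫ ω, X ω i * X ω j / (ν + X ω ⬝ᵥ Θ₀ *ᵥ X ω) ∂μ
        = (1 / p : ℝ) * (∫ ω, (R ω) ^ 2 / (ν + (R ω) ^ 2) ∂μ) * Θ₀⁻¹ i j) ∧
    ((∀ i j, ∫ ω, -(1 / 2 : ℝ) * Θ₀⁻¹ i j
          + ((ν + p) / 2) * (X ω i * X ω j) / (ν + X ω ⬝ᵥ Θ₀ *ᵥ X ω) ∂μ = 0)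
      ↔ ∫ ω, (R ω) ^ 2 / (ν + (R ω) ^ 2) ∂μ = p / (ν + p)) := by
  have hSS := hΘ₀.inv.posSemidef.sqrt_mul_self
  have hSt := hΘ₀.inv.posSemidef.transpose_sqrt
  generalize hΘ₀.inv.posSemidef.sqrt = S at hSS hSt hXdef
  have hSΘS : Sᵀ * Θ₀ * S = 1 := by
    rw [hSt]
    exact mul_mul_self_eq_one_of_mul_self_eq_inv hΘ₀.det_pos.ne'.isUnit hSS
  have hratio :=
    integrable_and_integral_ratio_of_elliptical hν hu husphere hurot hR hindep hSΘS hXdef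
  set E := ∫ ω, R ω ^ 2 / (ν + R ω ^ 2) ∂μ
  have hmean : ∀ i j, ∫ ω, X ω i * X ω j / (ν + X ω ⬝ᵥ Θ₀ *ᵥ X ω) ∂μ
      = (1 / p : ℝ) * E * Θ₀⁻¹ i j := fun i j => by
    rw [(hratio i j).2, hSt, hSS, Fintype.card_fin, one_div]
  refine ⟨hmean, ?_⟩
  have hscore : ∀ i j, ∫ ω, -(1 / 2 : ℝ) * Θ₀⁻¹ i j
      + ((ν + p) / 2) * (X ω i * X ω j) / (ν + X ω ⬝ᵥ Θ₀ *ᵥ X ω) ∂μ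
        = -(1 / 2 : ℝ) * Θ₀⁻¹ i j + ((ν + p) / 2 * (1 / p * E)) * Θ₀⁻¹ i j := fun i j => by
    simp_rw [mul_div_assoc ((ν + p) / 2)]
    rw [integral_add (integrable_const _) ((hratio i j).1.const_mul _), integral_const,
      integral_const_mul, hmean]
    simp only [probReal_univ, one_smul]
    ring
  have hΘinv : Θ₀⁻¹ ≠ 0 := by
    have : Nonempty (Fin p) := ⟨⟨0, hp⟩⟩
    exact fun h => hΘ₀.inv.det_pos.ne' (by rw [h, det_zero])
  have hνp : ν + p ≠ 0 := by positivity
  simp_rw [hscore, forall_neg_half_mul_add_mul_eq_zero_iff hΘinv, eq_div_iff hνp]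
  constructor <;> intro h <;> field_simp at h ⊢ <;> linarith

/-- Let `X = Θ₀^{−1/2} u R` be elliptical (`u` uniform on the sphere,
`R ≥ 0` independent of `u`), `ν > 0`. Then
`E[XXᵀ/(ν+XᵀΘ₀X)] = (1/p)·E[R²/(ν+R²)]·Θ₀⁻¹`, and the expected `t`-loss score vanishes
at `Θ₀` if and only if `E[R²/(ν+R²)] = p/(ν+p)`. -/
theorem stmt13
    {Ω : Type*} [MeasurableSpace Ω] (μ : Measure Ω) [IsProbabilityMeasure μ]
    {p : ℕ} (hp : 1 ≤ p) (ν : ℝ) (hν : 0 < ν)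
    (Θ₀ : Matrix (Fin p) (Fin p) ℝ) (hΘ₀ : Θ₀.PosDef)
    (u : Ω → Fin p → ℝ) (hu : Measurable u)
    (husphere : ∀ᵐ ω ∂μ, ∑ i, (u ω i) ^ 2 = 1)
    (hurot : ∀ O : Matrix.orthogonalGroup (Fin p) ℝ,
      Measure.map (fun ω => (O : Matrix (Fin p) (Fin p) ℝ) *ᵥ u ω) μ = Measure.map u μ)
    (R : Ω → ℝ) (hR : Measurable R) (hRpos : ∀ ω, 0 ≤ R ω)
    (hindep : IndepFun u R μ)
    (X : Ω → Fin p → ℝ)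
    (hXdef : ∀ ω, X ω = R ω • (hΘ₀.inv.posSemidef.sqrt *ᵥ u ω)) :
    (∀ i j, ∫ ω, X ω i * X ω j / (ν + X ω ⬝ᵥ Θ₀ *ᵥ X ω) ∂μ
        = (1 / p : ℝ) * (∫ ω, (R ω) ^ 2 / (ν + (R ω) ^ 2) ∂μ) * Θ₀⁻¹ i j) ∧
    ((∀ i j, ∫ ω, -(1 / 2 : ℝ) * Θ₀⁻¹ i j
          + ((ν + p) / 2) * (X ω i * X ω j) / (ν + X ω ⬝ᵥ Θ₀ *ᵥ X ω) ∂μ = 0)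
      ↔ ∫ ω, (R ω) ^ 2 / (ν + (R ω) ^ 2) ∂μ = p / (ν + p)) :=
  stmt13_general μ hp ν hν Θ₀ hΘ₀ u hu husphere hurot R hR hindep X hXdef
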